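/- Let k ≥ 1 and α ≥ 2 with k + α + 1 ≤ n, let G attain the maximum connective eccentricity index among all k-connected graphs of order n with independence number α, let I be a maximum independent set of G, let A be a vertex cut with |A| = k, and let G_1, G_2 be the two components of G - A with G_2 consisting of a single vertex. Then the vertex of G_2 belongs to I. -/

import Mathlib

open Finset
open scoped Classical

namespace CEI

variable {V : Type*}

/-- Degree of a vertex. -/
noncomputable def deg [Fintype V] (G : SimpleGraph V) (v : V) : ℕ :=
  (Finset.univ.filter fun u => G.Adj v u).card

/-- Eccentricity of a vertex. -/
noncomputable def ecc [Fintype V] (G : SimpleGraph V) (v : V) : ℕ :=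
  Finset.univ.sup fun u => G.dist v u

/-- Connective eccentricity index. -/
noncomputable def cei [Fintype V] (G : SimpleGraph V) : ℝ :=
  ∑ v : V, (deg G v : ℝ) / (ecc G v)

/-- Diameter. -/
noncomputable def diam [Fintype V] (G : SimpleGraph V) : ℕ :=
  Finset.univ.sup fun v => ecc G v

/-- `G` is `k`-connected: removing fewer than `k` vertices leaves a
connected graph with more than one vertex. -/
def KConnected [Fintype V] (k : ℕ) (G : SimpleGraph V) : Prop :=
  ∀ A : Finset V, A.card < k →
    (G.induce ((A : Set V)ᶜ)).Connected ∧ 1 < ((A : Set V)ᶜ).ncard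

/-- A set of pairwise non-adjacent vertices. -/
def IsIndepSet (G : SimpleGraph V) (s : Set V) : Prop :=
  s.Pairwise fun u v => ¬ G.Adj u v

/-- Independence number. -/
noncomputable def indepNum [Fintype V] (G : SimpleGraph V) : ℕ :=
  Finset.univ.sup fun s : Finset V => if IsIndepSet G ↑s then s.card else 0

/-- A vertex cut: deleting `A` disconnects `G`. -/
def IsVertexCut (G : SimpleGraph V) (A : Finset V) : Prop :=
  ¬ (G.induce ((A : Set V)ᶜ)).Preconnected

/-- Sequential join of complete graphs with part sizes `cs`. -/
def seqCompleteJoin (cs : List ℕ) : SimpleGraph ((i : Fin cs.length) × Fin (cs.get i)) where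
  Adj x y := x ≠ y ∧ (x.1.val = y.1.val ∨ x.1.val + 1 = y.1.val ∨ y.1.val + 1 = x.1.val)
  symm := ⟨fun x y ⟨h1, h2⟩ => ⟨h1.symm, by tauto⟩⟩
  loopless := ⟨fun x ⟨h, _⟩ => h rfl⟩

/-- `K_k ∨ (K_a ∪ K_b)`. -/
def KJoin2 (k a b : ℕ) : SimpleGraph (Fin (k + a + b)) where
  Adj x y := x ≠ y ∧ (x.val < k ∨ y.val < k ∨ (x.val < k + a ↔ y.val < k + a))
  symm := ⟨fun x y ⟨h1, h2⟩ => ⟨h1.symm, by tauto⟩⟩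
  loopless := ⟨fun x ⟨h, _⟩ => h rfl⟩

/-- `K_b ∨ a K_1`. -/
def splitGraph (b a : ℕ) : SimpleGraph (Fin (b + a)) where
  Adj x y := x ≠ y ∧ (x.val < b ∨ y.val < b)
  symm := ⟨fun x y ⟨h1, h2⟩ => ⟨h1.symm, by tauto⟩⟩
  loopless := ⟨fun x ⟨h, _⟩ => h rfl⟩

/-- `S_{n,α} = K_k ∨ (K_1 ∪ (K_{n-k-α} ∨ (α-1)K_1))`; vertices `0,…,k-1` form the
clique `K_k` joined to everything, vertex `k` is the isolated-ish `K_1`, vertices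
`k+1,…,n-α` form `K_{n-k-α}`, and vertices `n-α+1,…,n-1` are the `α-1` independent ones. -/
def Sgraph (n k a : ℕ) : SimpleGraph (Fin n) where
  Adj x y := x ≠ y ∧ (x.val < k ∨ y.val < k ∨
    (x.val ≠ k ∧ y.val ≠ k ∧ ¬(n + 1 - a ≤ x.val ∧ n + 1 - a ≤ y.val)))
  symm := ⟨fun x y ⟨h1, h2⟩ => ⟨h1.symm, by tauto⟩⟩
  loopless := ⟨fun x ⟨h, _⟩ => h rfl⟩


/-!
If the vertex `w` of the trivial component were not in `I`, join it to a vertex `u` of the other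
component. The new edge keeps `k`-connectivity and, having the end `w ∉ I`, keeps `I` independent,
so the independence number stays `a`. But it raises `deg w` while no eccentricity grows, so the
connective eccentricity index strictly increases, contradicting the maximality of `G`.
-/

section

variable {G H : SimpleGraph V}

theorem KConnected.connected [Fintype V] {k : ℕ} (hk : 1 ≤ k) (hG : KConnected k G) :
    G.Connected := by
  have h := (hG ∅ (by rw [Finset.card_empty]; omega)).1
  rw [Finset.coe_empty, Set.compl_empty] at h
  exact G.induceUnivIso.connected_iff.mp h

theorem KConnected.mono [Fintype V] {k : ℕ} (h : G ≤ H) (hG : KConnected k G) :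
    KConnected k H := fun B hB =>
  ⟨(hG B hB).1.mono fun _ _ hxy => h hxy, (hG B hB).2⟩

theorem IsIndepSet.anti (h : G ≤ H) {s : Set V} (hs : IsIndepSet H s) : IsIndepSet G s :=
  fun _ hx _ hy hxy hadj => hs hx hy hxy (h hadj)

theorem IsIndepSet.sup_edge {s : Set V} {v u : V} (hs : IsIndepSet G s) (hv : v ∉ s) :
    IsIndepSet (G ⊔ SimpleGraph.edge v u) s := by
  rintro x hx y hy hxy (hadj | hadj)
  · exact hs hx hy hxy hadj
  · rcases ((SimpleGraph.edge_adj _ _ _ _).mp hadj).1 with ⟨rfl, -⟩ | ⟨-, rfl⟩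
    · exact hv hx
    · exact hv hy

theorem IsIndepSet.ncard_le_indepNum [Fintype V] {s : Set V} (hs : IsIndepSet G s) :
    s.ncard ≤ indepNum G := by
  have hs' : IsIndepSet G ↑s.toFinset := by rwa [Set.coe_toFinset]
  have := Finset.le_sup (f := fun t : Finset V => if IsIndepSet G ↑t then t.card else 0)
    (Finset.mem_univ s.toFinset)
  rwa [if_pos hs', ← Set.ncard_eq_toFinset_card'] at this

theorem indepNum_anti [Fintype V] (h : G ≤ H) : indepNum H ≤ indepNum G := by
  refine Finset.sup_mono_fun fun s _ => ?_
  by_cases hs : IsIndepSet H ↑s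
  · rw [if_pos hs, if_pos (hs.anti h)]
  · rw [if_neg hs]
    exact Nat.zero_le _

theorem indepNum_eq_of_le [Fintype V] (h : G ≤ H) {s : Set V} (hs : IsIndepSet H s)
    (hsG : s.ncard = indepNum G) : indepNum H = indepNum G :=
  le_antisymm (indepNum_anti h) (hsG ▸ hs.ncard_le_indepNum)

theorem ecc_anti [Fintype V] (hG : G.Connected) (h : G ≤ H) (v : V) : ecc H v ≤ ecc G v :=
  Finset.sup_mono_fun fun x _ => (hG.preconnected v x).dist_anti h

theorem ecc_pos [Fintype V] [Nontrivial V] (hG : G.Connected) (v : V) : 0 < ecc G v := by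
  obtain ⟨x, hx⟩ := exists_ne v
  exact (hG.pos_dist_of_ne hx.symm).trans_le (Finset.le_sup (Finset.mem_univ x))

theorem deg_mono [Fintype V] (h : G ≤ H) (v : V) : deg G v ≤ deg H v :=
  Finset.card_le_card (Finset.monotone_filter_right _ fun _ _ hx => h hx)

theorem deg_lt_deg [Fintype V] (h : G ≤ H) {v u : V} (hH : H.Adj v u) (hG : ¬ G.Adj v u) :
    deg G v < deg H v := by
  refine Finset.card_lt_card <| (Finset.ssubset_iff_of_subset
    (Finset.monotone_filter_right _ fun _ _ hx => h hx)).mpr ⟨u, ?_, ?_⟩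
  · exact Finset.mem_filter.mpr ⟨Finset.mem_univ u, hH⟩
  · exact fun hu => hG (Finset.mem_filter.mp hu).2

theorem cei_lt_cei_of_lt [Fintype V] (hG : G.Connected) (h : G < H) : cei G < cei H := by
  obtain ⟨v, u, hH, hGvu⟩ : ∃ v u, H.Adj v u ∧ ¬ G.Adj v u := by
    by_contra! hno
    exact h.not_ge fun x y hxy => hno x y hxy
  have : Nontrivial V := ⟨⟨v, u, hH.ne⟩⟩
  have hHconn : H.Connected := hG.mono h.le
  have hterm : ∀ x, (deg G x : ℝ) / ecc G x ≤ (deg H x : ℝ) / ecc H x := fun x => by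
    have := ecc_pos hHconn x
    gcongr
    · exact deg_mono h.le x
    · exact ecc_anti hG h.le x
  refine Finset.sum_lt_sum (fun x _ => hterm x) ⟨v, Finset.mem_univ v, ?_⟩
  have hpos : (0 : ℝ) < ecc H v := by exact_mod_cast ecc_pos hHconn v
  calc (deg G v : ℝ) / ecc G v ≤ (deg G v : ℝ) / ecc H v := by
        gcongr
        exact ecc_anti hG h.le v
    _ < (deg H v : ℝ) / ecc H v := by
        gcongr
        exact deg_lt_deg h.le hH hGvu

end

theorem not_reachable_of_mem_supp {W : Type*} {G : SimpleGraph W} {c₁ c₂ : G.ConnectedComponent}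
    (hne : c₁ ≠ c₂) {x y : W} (hx : x ∈ c₁.supp) (hy : y ∈ c₂.supp) : ¬ G.Reachable x y :=
  fun hxy => hne <| hx.symm.trans <| (SimpleGraph.ConnectedComponent.sound hxy).trans hy

theorem trivial_component_in_indep_general {V : Type} [Fintype V] (G : SimpleGraph V)
    (n k a : ℕ) (hk : 1 ≤ k)
    (hcard : Fintype.card V = n) (hconn : KConnected k G) (hindep : indepNum G = a)
    (hmax : ∀ (W : Type) [Fintype W] (H : SimpleGraph W),
      Fintype.card W = n → KConnected k H → indepNum H = a → cei H ≤ cei G)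
    (I : Set V) (hI : IsIndepSet G I) (hIcard : I.ncard = a)
    (A : Finset V)
    (c₁ c₂ : (G.induce ((A : Set V)ᶜ)).ConnectedComponent) (hne : c₁ ≠ c₂)
    (w : ((A : Set V)ᶜ : Set V)) (hw : c₂.supp = {w}) :
    (w : V) ∈ I := by
  by_contra hwI
  obtain ⟨u, hu⟩ := c₁.nonempty_supp
  have hwu : ¬ (G.induce ((A : Set V)ᶜ)).Reachable w u :=
    not_reachable_of_mem_supp hne.symm (hw ▸ rfl) hu
  have hlt : G < G ⊔ SimpleGraph.edge (w : V) u :=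
    SimpleGraph.lt_sup_edge _ _ _ (fun h => hwu (Subtype.ext h ▸ .refl _))
      (fun h => hwu (SimpleGraph.induce_adj.mpr h).reachable)
  have hindep' : indepNum (G ⊔ SimpleGraph.edge (w : V) u) = a :=
    hindep ▸ indepNum_eq_of_le hlt.le (hI.sup_edge hwI) (hIcard.trans hindep.symm)
  have hle := hmax V _ hcard (hconn.mono hlt.le) hindep'
  exact (cei_lt_cei_of_lt (hconn.connected hk) hlt).not_ge hle

/-- with `G` extremal as in Statement 10, `I` a maximum
independent set, `A` a vertex cut of size `k`, and the two components of `G - A`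
being `G₁` and the single-vertex component `G₂ = {w}`, the vertex `w` belongs to
`I`. -/
theorem trivial_component_in_indep {V : Type} [Fintype V] (G : SimpleGraph V)
    (n k a : ℕ) (hk : 1 ≤ k) (ha : 2 ≤ a) (hn : k + a + 1 ≤ n)
    (hcard : Fintype.card V = n) (hconn : KConnected k G) (hindep : indepNum G = a)
    (hmax : ∀ (W : Type) [Fintype W] (H : SimpleGraph W),
      Fintype.card W = n → KConnected k H → indepNum H = a → cei H ≤ cei G)
    (I : Set V) (hI : IsIndepSet G I) (hIcard : I.ncard = a)
    (A : Finset V) (hA : IsVertexCut G A) (hAcard : A.card = k)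
    (c₁ c₂ : (G.induce ((A : Set V)ᶜ)).ConnectedComponent) (hne : c₁ ≠ c₂)
    (hall : ∀ c, c = c₁ ∨ c = c₂)
    (w : ((A : Set V)ᶜ : Set V)) (hw : c₂.supp = {w}) :
    (w : V) ∈ I :=
  trivial_component_in_indep_general G n k a hk hcard hconn hindep hmax I hI hIcard A c₁ c₂ hne w hw

end CEI
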